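/- arXiv:1311.2035 — 6 statements merged into one kernel-verified Lean document; each statement's English description precedes it below -/
import Mathlib

section
/- For a continuously differentiable function u : [0,l] → ℝ with u(0) = u(l) = 0, one has ∫₀ˡ u(x)² dx ≤ (l²/2) ∫₀ˡ u'(x)² dx. -/
open MeasureTheory intervalIntegral

/-!
Since `u a = 0`, the fundamental theorem of calculus writes `u x = ∫ t in a..x, u' t`, so
Cauchy–Schwarz gives `u x ^ 2 ≤ (x - a) * ∫ t in a..b, u' t ^ 2`; integrating this pointwise
bound over `[a, b]` produces the factor `(b - a) ^ 2 / 2`.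
-/

theorem sq_integral_le_mul_integral_sq {a b : ℝ} (hab : a ≤ b) {g : ℝ → ℝ}
    (hg : IntervalIntegrable g volume a b)
    (hg2 : IntervalIntegrable (fun t => g t ^ 2) volume a b) :
    (∫ t in a..b, g t) ^ 2 ≤ (b - a) * ∫ t in a..b, g t ^ 2 := by
  set A := ∫ t in a..b, g t
  rcases hab.eq_or_lt with rfl | hlt
  · simp [A]
  have hexpand : ∫ t in a..b, ((b - a) * g t - A) ^ 2
      = (b - a) * ((b - a) * ∫ t in a..b, g t ^ 2) - (b - a) * A ^ 2 := by
    have hsq : ∀ t, ((b - a) * g t - A) ^ 2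
        = (b - a) ^ 2 * g t ^ 2 - 2 * (b - a) * A * g t + A ^ 2 := fun t => by ring
    simp_rw [hsq]
    rw [integral_add ((hg2.const_mul _).sub (hg.const_mul _)) intervalIntegrable_const,
      integral_sub (hg2.const_mul _) (hg.const_mul _), intervalIntegral.integral_const_mul,
      intervalIntegral.integral_const_mul, intervalIntegral.integral_const, smul_eq_mul]
    ring
  have hnonneg : 0 ≤ ∫ t in a..b, ((b - a) * g t - A) ^ 2 :=
    integral_nonneg hab fun t _ => sq_nonneg _
  rw [hexpand, ← mul_sub] at hnonneg
  have := nonneg_of_mul_nonneg_right hnonneg (sub_pos.2 hlt)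
  linarith

theorem sq_le_mul_integral_sq_deriv {a b : ℝ} {u u' : ℝ → ℝ}
    (hu : ∀ x ∈ Set.Icc a b, HasDerivAt u (u' x) x) (hu' : ContinuousOn u' (Set.Icc a b))
    (ha : u a = 0) {x : ℝ} (hx : x ∈ Set.Icc a b) :
    u x ^ 2 ≤ (x - a) * ∫ t in a..b, u' t ^ 2 := by
  have hsub : Set.Icc a x ⊆ Set.Icc a b := Set.Icc_subset_Icc le_rfl hx.2
  have hftc : ∫ t in a..x, u' t = u x := by
    rw [integral_eq_sub_of_hasDerivAt (fun t ht => hu t (hsub (Set.uIcc_of_le hx.1 ▸ ht)))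
      ((hu'.mono hsub).intervalIntegrable_of_Icc hx.1), ha, sub_zero]
  calc u x ^ 2 = (∫ t in a..x, u' t) ^ 2 := by rw [hftc]
    _ ≤ (x - a) * ∫ t in a..x, u' t ^ 2 :=
      sq_integral_le_mul_integral_sq hx.1 ((hu'.mono hsub).intervalIntegrable_of_Icc hx.1)
        (((hu'.pow 2).mono hsub).intervalIntegrable_of_Icc hx.1)
    _ ≤ (x - a) * ∫ t in a..b, u' t ^ 2 := by
      gcongr
      · exact sub_nonneg.2 hx.1
      · exact integral_mono_interval le_rfl hx.1 hx.2
          (Filter.Eventually.of_forall fun t => sq_nonneg _)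
          ((hu'.pow 2).intervalIntegrable_of_Icc (hx.1.trans hx.2))

theorem integral_sq_le_of_hasDerivAt_of_left_eq_zero {a b : ℝ} (hab : a ≤ b)
    {u u' : ℝ → ℝ}
    (hu : ∀ x ∈ Set.Icc a b, HasDerivAt u (u' x) x) (hu' : ContinuousOn u' (Set.Icc a b))
    (ha : u a = 0) :
    ∫ x in a..b, u x ^ 2 ≤ (b - a) ^ 2 / 2 * ∫ x in a..b, u' x ^ 2 := by
  have hcont : ContinuousOn u (Set.Icc a b) :=
    fun x hx => (hu x hx).continuousAt.continuousWithinAt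
  calc ∫ x in a..b, u x ^ 2 ≤ ∫ x in a..b, (x - a) * ∫ t in a..b, u' t ^ 2 :=
        integral_mono_on hab ((hcont.pow 2).intervalIntegrable_of_Icc hab)
          ((intervalIntegrable_id.sub intervalIntegrable_const).mul_const _)
          fun x hx => sq_le_mul_integral_sq_deriv hu hu' ha hx
    _ = (b - a) ^ 2 / 2 * ∫ x in a..b, u' x ^ 2 := by
      rw [intervalIntegral.integral_mul_const,
        integral_sub intervalIntegrable_id intervalIntegrable_const, integral_id,
        intervalIntegral.integral_const, smul_eq_mul]
      ring

theorem friedrichs_inequality_general (l : ℝ) (hl : 0 < l) (u u' : ℝ → ℝ)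
    (hu : ∀ x ∈ Set.Icc (0:ℝ) l, HasDerivAt u (u' x) x)
    (hu' : ContinuousOn u' (Set.Icc 0 l))
    (h0 : u 0 = 0) :
    (∫ x in (0:ℝ)..l, (u x)^2) ≤ l^2 / 2 * ∫ x in (0:ℝ)..l, (u' x)^2 := by
  simpa using integral_sq_le_of_hasDerivAt_of_left_eq_zero hl.le hu hu' h0

theorem friedrichs_inequality (l : ℝ) (hl : 0 < l) (u u' : ℝ → ℝ)
    (hu : ∀ x ∈ Set.Icc (0:ℝ) l, HasDerivAt u (u' x) x)
    (hu' : ContinuousOn u' (Set.Icc 0 l))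
    (h0 : u 0 = 0) (hL : u l = 0) :
    (∫ x in (0:ℝ)..l, (u x)^2) ≤ l^2 / 2 * ∫ x in (0:ℝ)..l, (u' x)^2 :=
  friedrichs_inequality_general l hl u u' hu hu' h0
end

section
/- For a continuously differentiable function u : [0,l] → ℝ (without boundary conditions), one has ∫₀ˡ u(x)² dx ≤ l² ∫₀ˡ u'(x)² dx + l(u(0)² + u(l)²). -/
open MeasureTheory intervalIntegral

/-! Writing `u x - u 0` and `u l - u x` as integrals of `u'`, Cauchy–Schwarz bounds their squares
by `x ∫₀ˣ u'²` and `(l - x) ∫ₓˡ u'²`. Together with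
`u x ² ≤ u 0 ² + u l ² + (u x - u 0)² + (u l - u x)²` this gives the pointwise bound
`u x ² ≤ u 0 ² + u l ² + l ∫₀ˡ u'²`, which integrates over `[0, l]` to the claim. -/

theorem sq_intervalIntegral_le {g : ℝ → ℝ} {a b : ℝ} (hab : a ≤ b)
    (hg : IntervalIntegrable g volume a b)
    (hg2 : IntervalIntegrable (fun x => g x ^ 2) volume a b) :
    (∫ x in a..b, g x) ^ 2 ≤ (b - a) * ∫ x in a..b, g x ^ 2 := by
  rcases hab.eq_or_lt with rfl | hlt
  · simp
  have : IsFiniteMeasure (volume.restrict (Set.uIoc a b)) := by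
    rw [Set.uIoc_of_le hab]; infer_instance
  have : NeZero (volume.restrict (Set.uIoc a b)) := ⟨by simp [Set.uIoc_of_le hab, hlt]⟩
  have jensen : (⨍ x in a..b, g x) ^ 2 ≤ ⨍ x in a..b, g x ^ 2 :=
    (even_two.convexOn_pow (𝕜 := ℝ)).map_average_le (continuous_pow 2).continuousOn
      isClosed_univ (by simp) hg.def' hg2.def'
  rw [interval_average_eq_div, interval_average_eq_div, div_pow,
    div_le_div_iff₀ (by positivity) (by linarith)] at jensen
  nlinarith

theorem sq_sub_le_mul_integral_sq_deriv {u u' : ℝ → ℝ} {a b : ℝ} (hab : a ≤ b)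
    (hu : ∀ x ∈ Set.Icc a b, HasDerivAt u (u' x) x)
    (hu' : IntervalIntegrable u' volume a b)
    (hu'2 : IntervalIntegrable (fun x => u' x ^ 2) volume a b) :
    (u b - u a) ^ 2 ≤ (b - a) * ∫ x in a..b, u' x ^ 2 := by
  rw [← integral_eq_sub_of_hasDerivAt (fun x hx => hu x (Set.uIcc_of_le hab ▸ hx)) hu']
  exact sq_intervalIntegral_le hab hu' hu'2

theorem sq_le_add_mul_integral_sq_deriv {u u' : ℝ → ℝ} {a b x : ℝ} (hx : x ∈ Set.Icc a b)
    (hu : ∀ x ∈ Set.Icc a b, HasDerivAt u (u' x) x)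
    (hu' : IntervalIntegrable u' volume a b)
    (hu'2 : IntervalIntegrable (fun x => u' x ^ 2) volume a b) :
    u x ^ 2 ≤ u a ^ 2 + u b ^ 2 + (b - a) * ∫ t in a..b, u' t ^ 2 := by
  obtain ⟨hax, hxb⟩ := hx
  have hx : x ∈ Set.uIcc a b := Set.mem_uIcc_of_le hax hxb
  have left : Set.uIcc a x ⊆ Set.uIcc a b := Set.uIcc_subset_uIcc_left hx
  have right : Set.uIcc x b ⊆ Set.uIcc a b := Set.uIcc_subset_uIcc_right hx
  have hleft := sq_sub_le_mul_integral_sq_deriv hax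
    (fun t ht => hu t ⟨ht.1, ht.2.trans hxb⟩) (hu'.mono_set left) (hu'2.mono_set left)
  have hright := sq_sub_le_mul_integral_sq_deriv hxb
    (fun t ht => hu t ⟨hax.trans ht.1, ht.2⟩) (hu'.mono_set right) (hu'2.mono_set right)
  have hsplit := integral_add_adjacent_intervals (hu'2.mono_set left) (hu'2.mono_set right)
  have hP : 0 ≤ ∫ t in a..x, u' t ^ 2 := integral_nonneg hax fun t _ => sq_nonneg _
  have hR : 0 ≤ ∫ t in x..b, u' t ^ 2 := integral_nonneg hxb fun t _ => sq_nonneg _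
  -- `u a² + u b² + (u x - u a)² + (u b - u x)² - u x² = (u x - u a - u b)² + (u a - u b)²`
  nlinarith [sq_nonneg (u x - u a - u b), sq_nonneg (u a - u b),
    mul_nonneg (sub_nonneg.2 hxb) hP, mul_nonneg (sub_nonneg.2 hax) hR]

theorem poincare_inequality_with_boundary (l : ℝ) (hl : 0 < l) (u u' : ℝ → ℝ)
    (hu : ∀ x ∈ Set.Icc (0:ℝ) l, HasDerivAt u (u' x) x)
    (hu' : ContinuousOn u' (Set.Icc 0 l)) :
    (∫ x in (0:ℝ)..l, (u x)^2)
      ≤ l^2 * (∫ x in (0:ℝ)..l, (u' x)^2) + l * ((u 0)^2 + (u l)^2) := by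
  have hu2 : IntervalIntegrable (fun x => u x ^ 2) volume 0 l :=
    (ContinuousOn.pow (fun x hx => (hu x hx).continuousAt.continuousWithinAt) 2)
      |>.intervalIntegrable_of_Icc hl.le
  have hbound := integral_mono_on hl.le hu2 intervalIntegrable_const fun x hx =>
    sq_le_add_mul_integral_sq_deriv hx hu (hu'.intervalIntegrable_of_Icc hl.le)
      ((hu'.pow 2).intervalIntegrable_of_Icc hl.le)
  rw [intervalIntegral.integral_const, smul_eq_mul, sub_zero] at hbound
  linarith
end

section
/- Let u : [0,T] → ℝ be twice continuously differentiable with |u''| ≤ M on [0,T], let 0 < θ < 1, let τ = T/j₀ with grid points t_s = sτ, and for 0 ≤ j < j₀ define the L1 discretization Δ^θ u(t_{j+1}) = (1/Γ(2-θ)) Σ_{s=0}^{j} (t_{j-s+1}^{1-θ} - t_{j-s}^{1-θ}) (u(t_{s+1}) - u(t_s))/τ. Then |∂_{0t_{j+1}}^θ u - Δ^θ u(t_{j+1})| ≤ C·M·τ^{2-θ} for a constant C independent of τ, j and u (one may take C depending only on θ, e.g. C = 2^θ/(4Γ(3-θ)) plus the midpoint-rule contribution). -/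
/-!
On each grid cell `[sτ, (s+1)τ]` the L1 scheme replaces `u'` by its mean
`slope u (sτ) ((s+1)τ)`, which by the mean value theorem differs from `u'` by at most `M τ`.
Since this deviation has mean zero on the cell, the weight `(t - η)^(-θ)` may be replaced by
its oscillation over the cell; on the cells away from `t` these oscillations telescope to at
most `τ^(-θ)`, giving `M τ^(2-θ)`. On the last cell the weight is singular but integrable with
integral `τ^(1-θ)/(1-θ)`, giving `M τ^(2-θ)/(1-θ)`.
-/

open MeasureTheory intervalIntegral

/-- Caputo fractional derivative of order `θ ∈ (0,1)` with base point `0`. -/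
noncomputable def caputo (θ : ℝ) (v : ℝ → ℝ) (t : ℝ) : ℝ :=
  (1 / Real.Gamma (1 - θ)) * ∫ η in (0:ℝ)..t, deriv v η * (t - η) ^ (-θ)

/-- L1 discretization of the Caputo derivative of order `θ` on a uniform grid
with step `τ`, evaluated at `t_{j+1} = (j+1)τ`. -/
noncomputable def l1Caputo (θ τ : ℝ) (u : ℝ → ℝ) (j : ℕ) : ℝ :=
  (1 / Real.Gamma (2 - θ)) *
    ∑ s ∈ Finset.range (j+1),
      ((((j - s + 1 : ℕ) : ℝ) * τ) ^ (1-θ) - (((j - s : ℕ) : ℝ) * τ) ^ (1-θ)) *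
        (u (((s:ℝ)+1) * τ) - u ((s:ℝ) * τ)) / τ

open Set Finset

section Kernel

variable {θ : ℝ}

lemma intervalIntegrable_sub_rpow_neg (hθ : θ < 1) (t a b : ℝ) :
    IntervalIntegrable (fun η => (t - η) ^ (-θ)) volume a b := by
  simpa using (intervalIntegrable_rpow' (a := t - a) (b := t - b) (r := -θ)
    (by linarith)).comp_sub_left t

lemma integral_sub_rpow_neg (hθ : θ < 1) (t a b : ℝ) :
    ∫ η in a..b, (t - η) ^ (-θ) = ((t - a) ^ (1 - θ) - (t - b) ^ (1 - θ)) / (1 - θ) := by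
  rw [integral_comp_sub_left (fun x : ℝ => x ^ (-θ)) t,
    integral_rpow (Or.inl (by linarith)), neg_add_eq_sub]

lemma monotoneOn_sub_rpow_neg (hθ : 0 ≤ θ) (t : ℝ) :
    MonotoneOn (fun η => (t - η) ^ (-θ)) (Iio t) := fun _ _ y hy hxy =>
  Real.rpow_le_rpow_of_nonpos (sub_pos.2 hy) (by linarith) (by linarith)

end Kernel

lemma abs_deriv_sub_slope_le {u : ℝ → ℝ} {a b M : ℝ} (hu : Differentiable ℝ u)
    (hu' : Differentiable ℝ (deriv u)) (hab : a < b)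
    (hM : ∀ x ∈ Icc a b, |deriv (deriv u) x| ≤ M) {η : ℝ} (hη : η ∈ Icc a b) :
    |deriv u η - slope u a b| ≤ M * (b - a) := by
  obtain ⟨ξ, hξ, hξu⟩ :=
    exists_deriv_eq_slope u hab hu.continuous.continuousOn hu.differentiableOn
  rw [slope_def_field, ← hξu]
  have hlip := (convex_Icc a b).norm_image_sub_le_of_norm_deriv_le (fun x _ => hu' x) hM
    (Ioo_subset_Icc_self hξ) hη
  have hM0 : 0 ≤ M := (abs_nonneg _).trans (hM η hη)
  calc |deriv u η - deriv u ξ| ≤ M * |η - ξ| := hlip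
    _ ≤ M * (b - a) := by
      gcongr
      rw [abs_sub_le_iff]
      constructor <;> linarith [hξ.1, hξ.2, hη.1, hη.2]

lemma integral_deriv_sub_slope {u : ℝ → ℝ} {a b : ℝ} (hu : Differentiable ℝ u)
    (hu' : Continuous (deriv u)) (hab : a ≠ b) :
    ∫ x in a..b, (deriv u x - slope u a b) = 0 := by
  rw [integral_sub (hu'.intervalIntegrable _ _) intervalIntegrable_const,
    integral_deriv_eq_sub (fun x _ => hu x) (hu'.intervalIntegrable _ _),
    intervalIntegral.integral_const, slope_def_field, smul_eq_mul,
    mul_div_cancel₀ _ (sub_ne_zero.2 hab.symm), sub_self]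

lemma abs_integral_mul_le_of_integral_eq_zero {g k : ℝ → ℝ} {a b ε : ℝ} (hab : a ≤ b)
    (hg : ContinuousOn g (Icc a b)) (hg0 : ∫ x in a..b, g x = 0)
    (hgε : ∀ x ∈ Icc a b, |g x| ≤ ε) (hk : MonotoneOn k (Icc a b)) :
    |∫ x in a..b, g x * k x| ≤ ε * (k b - k a) * (b - a) := by
  rw [← uIcc_of_le hab] at hg hk
  have hgk : IntervalIntegrable (fun x => g x * k x) volume a b := by
    simpa only [mul_comm] using hk.intervalIntegrable.continuousOn_mul hg
  -- `g` has mean zero, so `k` may be replaced by `k - k a`, which lies in `[0, k b - k a]`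
  have hshift : ∫ x in a..b, g x * k x = ∫ x in a..b, g x * (k x - k a) := by
    simp only [mul_sub]
    rw [integral_sub hgk (hg.intervalIntegrable.mul_const _),
      intervalIntegral.integral_mul_const, hg0, zero_mul, sub_zero]
  rw [uIcc_of_le hab] at hg hk
  rw [hshift, ← Real.norm_eq_abs, ← abs_of_nonneg (sub_nonneg.2 hab)]
  refine norm_integral_le_of_norm_le_const fun x hx => ?_
  rw [uIoc_of_le hab] at hx
  have hx' : x ∈ Icc a b := Ioc_subset_Icc_self hx
  have hka : 0 ≤ k x - k a := sub_nonneg.2 (hk (left_mem_Icc.2 hab) hx' hx'.1)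
  rw [Real.norm_eq_abs, abs_mul, abs_of_nonneg hka]
  exact mul_le_mul (hgε x hx') (sub_le_sub_right (hk hx' (right_mem_Icc.2 hab) hx'.2) _) hka
    ((abs_nonneg _).trans (hgε x hx'))

lemma abs_integral_mul_le_of_nonneg {g k : ℝ → ℝ} {a b ε : ℝ} (hab : a ≤ b)
    (hgε : ∀ x ∈ Icc a b, |g x| ≤ ε) (hk : IntervalIntegrable k volume a b)
    (hk0 : ∀ x ∈ Icc a b, 0 ≤ k x) :
    |∫ x in a..b, g x * k x| ≤ ε * ∫ x in a..b, k x := by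
  rw [← Real.norm_eq_abs, ← intervalIntegral.integral_const_mul]
  refine norm_integral_le_of_norm_le hab (ae_of_all _ fun x hx => ?_) (hk.const_mul ε)
  have hx' : x ∈ Icc a b := Ioc_subset_Icc_self hx
  rw [Real.norm_eq_abs, abs_mul, abs_of_nonneg (hk0 x hx')]
  exact mul_le_mul_of_nonneg_right (hgε x hx') (hk0 x hx')

lemma abs_sum_range_succ_le_of_telescoping {E c : ℕ → ℝ} {A B : ℝ} {j : ℕ} (hA : 0 ≤ A)
    (hc0 : 0 ≤ c 0) (hE : ∀ s < j, |E s| ≤ A * (c (s + 1) - c s)) (hEj : |E j| ≤ B) :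
    |∑ s ∈ range (j + 1), E s| ≤ A * c j + B := by
  rw [sum_range_succ]
  calc |∑ s ∈ range j, E s + E j| ≤ ∑ s ∈ range j, |E s| + |E j| :=
        (abs_add_le _ _).trans (add_le_add_left (abs_sum_le_sum_abs _ _) _)
    _ ≤ ∑ s ∈ range j, A * (c (s + 1) - c s) + B :=
        add_le_add (sum_le_sum fun s hs => hE s (mem_range.1 hs)) hEj
    _ = A * (c j - c 0) + B := by rw [← mul_sum, sum_range_sub]
    _ ≤ A * c j + B := by nlinarith

section Grid

variable {θ τ : ℝ} {u : ℝ → ℝ}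

lemma caputo_grid_eq_sum (hθ : θ < 1) (hu' : Continuous (deriv u)) (j : ℕ) :
    caputo θ u ((j + 1) * τ) = 1 / Real.Gamma (1 - θ) * ∑ s ∈ range (j + 1),
      ∫ η in s * τ..(s + 1) * τ, deriv u η * ((j + 1) * τ - η) ^ (-θ) := by
  have hint (a b : ℝ) :
      IntervalIntegrable (fun η => deriv u η * ((j + 1) * τ - η) ^ (-θ)) volume a b :=
    (intervalIntegrable_sub_rpow_neg hθ _ a b).continuousOn_mul hu'.continuousOn
  have hsplit := sum_integral_adjacent_intervals (a := fun s : ℕ => (s : ℝ) * τ) (n := j + 1)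
    fun s _ => hint _ _
  push_cast at hsplit
  rw [caputo, hsplit, zero_mul]

lemma l1Caputo_eq_sum (hθ : θ < 1) (j : ℕ) :
    l1Caputo θ τ u j = 1 / Real.Gamma (1 - θ) * ∑ s ∈ range (j + 1),
      ∫ η in s * τ..(s + 1) * τ,
        slope u (s * τ) ((s + 1) * τ) * ((j + 1) * τ - η) ^ (-θ) := by
  have h1θ : 0 < 1 - θ := sub_pos.2 hθ
  have hΓ : Real.Gamma (2 - θ) = (1 - θ) * Real.Gamma (1 - θ) := by
    rw [show 2 - θ = 1 - θ + 1 by ring, Real.Gamma_add_one h1θ.ne']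
  rw [l1Caputo, mul_sum, mul_sum]
  refine sum_congr rfl fun s hs => ?_
  have hsj : ((j - s : ℕ) : ℝ) = j - s := Nat.cast_sub (Nat.lt_succ_iff.1 (mem_range.1 hs))
  rw [intervalIntegral.integral_const_mul, integral_sub_rpow_neg hθ, slope_def_field,
    hΓ, Nat.cast_add, hsj, Nat.cast_one]
  have hΓ1 := (Real.Gamma_pos_of_pos h1θ).ne'
  by_cases hτ : τ = 0
  · simp [hτ]
  field_simp
  ring_nf

lemma caputo_sub_l1Caputo_eq (hθ : θ < 1) (hu' : Continuous (deriv u)) (j : ℕ) :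
    caputo θ u ((j + 1) * τ) - l1Caputo θ τ u j =
      1 / Real.Gamma (1 - θ) * ∑ s ∈ range (j + 1), ∫ η in s * τ..(s + 1) * τ,
        (deriv u η - slope u (s * τ) ((s + 1) * τ)) * ((j + 1) * τ - η) ^ (-θ) := by
  rw [caputo_grid_eq_sum hθ hu', l1Caputo_eq_sum hθ, ← mul_sub, ← sum_sub_distrib]
  congr 1
  refine sum_congr rfl fun s _ => ?_
  simp only [sub_mul]
  exact (integral_sub ((intervalIntegrable_sub_rpow_neg hθ _ _ _).continuousOn_mul
    hu'.continuousOn) ((intervalIntegrable_sub_rpow_neg hθ _ _ _).const_mul _)).symm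

end Grid

section LocalError

variable {θ M a b : ℝ} {u : ℝ → ℝ}

lemma abs_integral_deriv_sub_slope_mul_rpow_le (hθ : 0 ≤ θ) (hu : Differentiable ℝ u)
    (hu' : Differentiable ℝ (deriv u)) (hab : a < b)
    (hM : ∀ x ∈ Icc a b, |deriv (deriv u) x| ≤ M) {t : ℝ} (hbt : b < t) :
    |∫ η in a..b, (deriv u η - slope u a b) * (t - η) ^ (-θ)|
      ≤ M * (b - a) ^ 2 * ((t - b) ^ (-θ) - (t - a) ^ (-θ)) :=
  (abs_integral_mul_le_of_integral_eq_zero hab.le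
    (hu'.continuous.sub continuous_const).continuousOn
    (integral_deriv_sub_slope hu hu'.continuous hab.ne)
    (fun _ hη => abs_deriv_sub_slope_le hu hu' hab hM hη)
    ((monotoneOn_sub_rpow_neg hθ t).mono fun _ hx => hx.2.trans_lt hbt)).trans_eq (by ring)

lemma abs_integral_deriv_sub_slope_mul_rpow_le_of_endpoint (hθ : θ < 1)
    (hu : Differentiable ℝ u) (hu' : Differentiable ℝ (deriv u)) (hab : a < b)
    (hM : ∀ x ∈ Icc a b, |deriv (deriv u) x| ≤ M) :
    |∫ η in a..b, (deriv u η - slope u a b) * (b - η) ^ (-θ)|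
      ≤ M * (b - a) ^ (2 - θ) / (1 - θ) := by
  have hbound := abs_integral_mul_le_of_nonneg hab.le
    (fun _ hη => abs_deriv_sub_slope_le hu hu' hab hM hη)
    (intervalIntegrable_sub_rpow_neg hθ b a b)
    fun x hx => Real.rpow_nonneg (sub_nonneg.2 hx.2) _
  rw [integral_sub_rpow_neg hθ, sub_self, Real.zero_rpow (sub_pos.2 hθ).ne', sub_zero]
    at hbound
  refine hbound.trans_eq ?_
  rw [show 2 - θ = 1 + (1 - θ) by ring, Real.rpow_add (sub_pos.2 hab), Real.rpow_one]
  ring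

end LocalError

theorem abs_caputo_sub_l1Caputo_le {θ τ M : ℝ} (hθ : θ ∈ Set.Ioo 0 1) (hτ : 0 < τ)
    {u : ℝ → ℝ} (hu : ContDiff ℝ 2 u) {j : ℕ}
    (hM : ∀ x ∈ Icc 0 ((j + 1) * τ), |deriv (deriv u) x| ≤ M) :
    |caputo θ u ((j + 1) * τ) - l1Caputo θ τ u j|
      ≤ (1 + 1 / (1 - θ)) / Real.Gamma (1 - θ) * M * τ ^ (2 - θ) := by
  obtain ⟨hθ0, hθ1⟩ := hθ
  have hud : Differentiable ℝ u := hu.differentiable (by norm_num)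
  have hu'd : Differentiable ℝ (deriv u) :=
    ((contDiff_succ_iff_deriv (n := 1)).1 hu).2.2.differentiable one_ne_zero
  set t : ℝ := (j + 1) * τ
  have hM0 : 0 ≤ M := (abs_nonneg _).trans (hM 0 ⟨le_rfl, by positivity⟩)
  have hcell (s : ℕ) : (s : ℝ) * τ < (s + 1) * τ := by nlinarith
  have hMcell (s : ℕ) (hs : s ≤ j) : ∀ x ∈ Icc ((s : ℝ) * τ) ((s + 1) * τ),
      |deriv (deriv u) x| ≤ M := fun x hx =>
    hM x (Icc_subset_Icc (by positivity) (mul_le_mul_of_nonneg_right (by gcongr) hτ.le) hx)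
  have hE (s : ℕ) (hs : s < j) :
      |∫ η in s * τ..(s + 1) * τ,
          (deriv u η - slope u (s * τ) ((s + 1) * τ)) * (t - η) ^ (-θ)|
        ≤ M * τ ^ 2 * ((t - ((s + 1 : ℕ) : ℝ) * τ) ^ (-θ) - (t - s * τ) ^ (-θ)) := by
    refine (abs_integral_deriv_sub_slope_mul_rpow_le hθ0.le hud hu'd (hcell s)
      (hMcell s hs.le) (mul_lt_mul_of_pos_right (by gcongr) hτ)).trans_eq ?_
    push_cast
    ring
  have hEj := abs_integral_deriv_sub_slope_mul_rpow_le_of_endpoint hθ1 hud hu'd (hcell j)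
    (hMcell j le_rfl)
  have hsum := abs_sum_range_succ_le_of_telescoping (mul_nonneg hM0 (sq_nonneg τ))
    (c := fun s => (t - s * τ) ^ (-θ)) (Real.rpow_nonneg (by simp [t]; positivity) _) hE hEj
  have hpow : τ ^ 2 * (t - j * τ) ^ (-θ) = τ ^ (2 - θ) := by
    rw [show t - j * τ = τ by ring, show 2 - θ = 2 + -θ by ring, Real.rpow_add hτ,
      Real.rpow_two]
  have hΓ := Real.Gamma_pos_of_pos (sub_pos.2 hθ1)
  rw [caputo_sub_l1Caputo_eq hθ1 hu'd.continuous, abs_mul, abs_of_pos (one_div_pos.2 hΓ)]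
  calc 1 / Real.Gamma (1 - θ) * |_|
      ≤ 1 / Real.Gamma (1 - θ) * (M * τ ^ 2 * (t - j * τ) ^ (-θ)
          + M * ((j + 1) * τ - j * τ) ^ (2 - θ) / (1 - θ)) :=
        mul_le_mul_of_nonneg_left hsum (by positivity)
    _ = _ := by
      rw [mul_assoc M, hpow, show (j + 1) * τ - j * τ = τ by ring]
      field_simp

theorem l1_truncation_error (θ : ℝ) (hθ : θ ∈ Set.Ioo (0:ℝ) 1) :
    ∃ C > 0, ∀ T : ℝ, 0 < T → ∀ j₀ : ℕ, 0 < j₀ → ∀ u : ℝ → ℝ, ∀ M : ℝ,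
      ContDiff ℝ 2 u →
      (∀ t ∈ Set.Icc (0:ℝ) T, |deriv (deriv u) t| ≤ M) →
      ∀ j : ℕ, j < j₀ →
        |caputo θ u (((j:ℝ)+1) * (T / j₀)) - l1Caputo θ (T / j₀) u j|
          ≤ C * M * (T / j₀) ^ (2 - θ) := by
  have h1θ : 0 < 1 - θ := sub_pos.2 hθ.2
  refine ⟨(1 + 1 / (1 - θ)) / Real.Gamma (1 - θ),
    div_pos (by positivity) (Real.Gamma_pos_of_pos h1θ), ?_⟩
  intro T hT j₀ hj₀ u M hu hM j hj
  have hj₀' : (0 : ℝ) < j₀ := Nat.cast_pos.2 hj₀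
  have hgrid : ((j : ℝ) + 1) * (T / j₀) ≤ T := by
    have hj' : (j : ℝ) + 1 ≤ j₀ := by exact_mod_cast hj
    rw [mul_div_assoc', div_le_iff₀ hj₀']
    nlinarith
  exact abs_caputo_sub_l1Caputo_le hθ (div_pos hT hj₀') hu
    fun x hx => hM x ⟨hx.1, hx.2.trans hgrid⟩
end

section
/- Let 0 < θ < 1, τ > 0, t_s = sτ, and set c_s = (t_{s+1}^{1-θ} - t_s^{1-θ})/Γ(2-θ) for s ≥ 0. Then for any real sequence v⁰, v¹, …, v^{j+1}, the L1 discrete Caputo derivative Δ^θ v^{j+1} = Σ_{s=0}^{j} c_{j-s} (v^{s+1} - v^s)/τ satisfies v^{j+1}·Δ^θ v^{j+1} ≥ (1/2)·Δ^θ (v²)^{j+1}, where Δ^θ (v²)^{j+1} = Σ_{s=0}^{j} c_{j-s} ((v^{s+1})² - (v^s)²)/τ. -/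
/-!
Since `x (a - b) - (a² - b²) / 2 = ((x - b)² - (x - a)²) / 2`, the defect
`v^{j+1} Δ^θ v^{j+1} - Δ^θ (v²)^{j+1} / 2` equals `Σ_s c_{j-s} (e_s - e_{s+1}) / (2τ)` with
`e_s = (v^{j+1} - v^s)² ≥ 0` and `e_{j+1} = 0`. Summation by parts turns this into a sum of
the nonnegative terms `(c_{k-1} - c_k) e_{j+1-k}` plus `c_j e_0 ≥ 0`, so only the positivity and
monotonicity of the kernel matter; the latter is the concavity of `t ↦ t^{1-θ}`.
-/

open Finset

lemma mul_le_sum_range_mul_sub_of_antitone {c E : ℕ → ℝ} (hc : Antitone c)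
    (hE : ∀ k, 0 ≤ E k) (hE0 : E 0 = 0) (n : ℕ) :
    c n * E n ≤ ∑ k ∈ range n, c k * (E (k + 1) - E k) := by
  induction n with
  | zero => simp [hE0]
  | succ n ih =>
    rw [sum_range_succ]
    have : c (n + 1) * E (n + 1) ≤ c n * E (n + 1) :=
      mul_le_mul_of_nonneg_right (hc n.le_succ) (hE _)
    linarith

lemma sum_range_mul_sub_nonneg_of_antitone {c e : ℕ → ℝ} (hc : Antitone c)
    (hc0 : ∀ k, 0 ≤ c k) (he : ∀ k, 0 ≤ e k) (j : ℕ) (hej : e (j + 1) = 0) :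
    0 ≤ ∑ s ∈ range (j + 1), c (j - s) * (e s - e (s + 1)) := by
  have hreflect : ∑ s ∈ range (j + 1), c (j - s) * (e s - e (s + 1))
      = ∑ k ∈ range (j + 1), c k * (e (j + 1 - (k + 1)) - e (j + 1 - k)) := by
    rw [← sum_range_reflect]
    refine sum_congr rfl fun k hk => ?_
    have hkj : k ≤ j := Nat.lt_succ_iff.mp (mem_range.mp hk)
    rw [show j - (j + 1 - 1 - k) = k by omega, show j + 1 - 1 - k = j + 1 - (k + 1) by omega,
      show j + 1 - (k + 1) + 1 = j + 1 - k by omega]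
  rw [hreflect]
  exact (mul_nonneg (hc0 _) (he _)).trans <|
    mul_le_sum_range_mul_sub_of_antitone hc (fun k => he _) (by simpa using hej) (j + 1)

theorem half_sum_sq_sub_le_mul_sum_sub {c : ℕ → ℝ} (hc : Antitone c) (hc0 : ∀ k, 0 ≤ c k)
    (v : ℕ → ℝ) (j : ℕ) :
    (1 / 2) * ∑ s ∈ range (j + 1), c (j - s) * (v (s + 1) ^ 2 - v s ^ 2)
      ≤ v (j + 1) * ∑ s ∈ range (j + 1), c (j - s) * (v (s + 1) - v s) := by
  set e : ℕ → ℝ := fun s => (v (j + 1) - v s) ^ 2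
  have hdefect : v (j + 1) * ∑ s ∈ range (j + 1), c (j - s) * (v (s + 1) - v s)
      - (1 / 2) * ∑ s ∈ range (j + 1), c (j - s) * (v (s + 1) ^ 2 - v s ^ 2)
      = (1 / 2) * ∑ s ∈ range (j + 1), c (j - s) * (e s - e (s + 1)) := by
    simp only [e, mul_sum, ← sum_sub_distrib]
    exact sum_congr rfl fun s _ => by ring
  have := sum_range_mul_sub_nonneg_of_antitone (e := e) hc hc0 (fun s => sq_nonneg _) j (by simp [e])
  linarith

lemma rpow_succ_mul_sub_rpow_mul_nonneg {p τ : ℝ} (hp : 0 ≤ p) (hτ : 0 ≤ τ) (s : ℕ) :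
    0 ≤ (((s : ℝ) + 1) * τ) ^ p - ((s : ℝ) * τ) ^ p :=
  sub_nonneg.mpr <| Real.rpow_le_rpow (by positivity) (by nlinarith) hp

lemma antitone_rpow_succ_mul_sub_rpow_mul {p τ : ℝ} (hp₀ : 0 ≤ p) (hp₁ : p ≤ 1) (hτ : 0 ≤ τ) :
    Antitone fun s : ℕ => (((s : ℝ) + 1) * τ) ^ p - ((s : ℝ) * τ) ^ p := by
  refine antitone_nat_of_succ_le fun s => ?_
  have hmid := (Real.concaveOn_rpow hp₀ hp₁).2 (Set.mem_Ici.mpr (by positivity : 0 ≤ (s : ℝ) * τ))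
    (Set.mem_Ici.mpr (by positivity : 0 ≤ ((s : ℝ) + 2) * τ))
    (by norm_num : (0 : ℝ) ≤ 1 / 2) (by norm_num : (0 : ℝ) ≤ 1 / 2) (by norm_num)
  simp only [smul_eq_mul] at hmid
  rw [show 1 / 2 * ((s : ℝ) * τ) + 1 / 2 * (((s : ℝ) + 2) * τ) = ((s : ℝ) + 1) * τ by ring] at hmid
  push_cast
  rw [show (s : ℝ) + 1 + 1 = s + 2 by ring]
  linarith

theorem discrete_caputo_product_inequality (θ τ : ℝ) (hθ : θ ∈ Set.Ioo (0:ℝ) 1)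
    (hτ : 0 < τ) (j : ℕ) (v : ℕ → ℝ)
    (c : ℕ → ℝ)
    (hc : ∀ s : ℕ, c s = ((((s:ℝ)+1) * τ) ^ (1-θ) - ((s:ℝ) * τ) ^ (1-θ)) / Real.Gamma (2 - θ)) :
    v (j+1) * ∑ s ∈ Finset.range (j+1), c (j - s) * (v (s+1) - v s) / τ
      ≥ (1/2) * ∑ s ∈ Finset.range (j+1), c (j - s) * ((v (s+1))^2 - (v s)^2) / τ := by
  obtain ⟨hθ0, hθ1⟩ := hθ
  have hΓ : 0 < Real.Gamma (2 - θ) := Real.Gamma_pos_of_pos (by linarith)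
  have hanti : Antitone c := fun a b hab => by
    rw [hc, hc]
    exact div_le_div_of_nonneg_right
      (antitone_rpow_succ_mul_sub_rpow_mul (by linarith) (by linarith) hτ.le hab) hΓ.le
  have hnonneg : ∀ s, 0 ≤ c s := fun s => by
    rw [hc]
    exact div_nonneg (rpow_succ_mul_sub_rpow_mul_nonneg (by linarith) hτ.le s) hΓ.le
  simp only [← sum_div, mul_div_assoc']
  exact div_le_div_of_nonneg_right (half_sum_sq_sub_le_mul_sum_sub hanti hnonneg v j) hτ.le
end

section
/- For a grid function y on {x_i = ih : 0 ≤ i ≤ N, Nh = l} (no boundary conditions), ‖y‖² ≤ l²‖y_{x̄}]‖² + l(y₀² + y_N²), where ‖y‖² = Σ_{i=1}^{N-1} y_i² h and ‖y_{x̄}]‖² = Σ_{i=1}^{N} ((y_i - y_{i-1})/h)² h. -/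
/-!
Every value `y i` is controlled by both boundary values through
`y i ^ 2 ≤ y 0 ^ 2 + y N ^ 2 + (y i - y 0) ^ 2 + (y N - y i) ^ 2`, and Cauchy–Schwarz on the
telescoping sums bounds the two increments by `i * S` and `(N - i) * S`, hence together by `N * S`,
where `S = ∑ (y (j + 1) - y j) ^ 2 = h * ‖y_x̄]‖²`. Summing over the `N - 1` interior nodes with
weight `h` and using `N * h = l` gives the inequality.
-/

open Finset

lemma sq_sub_le_mul_sum_sq_sub (f : ℕ → ℝ) {a b : ℕ} (hab : a ≤ b) :
    (f b - f a) ^ 2 ≤ ((b - a : ℕ) : ℝ) * ∑ j ∈ Ico a b, (f (j + 1) - f j) ^ 2 := by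
  rw [← sum_Ico_sub f hab]
  simpa using sq_sum_le_card_mul_sum_sq (s := Ico a b) (f := fun j => f (j + 1) - f j)

lemma sq_le_sq_add_sq_add_sq_sub_add_sq_sub (a b c : ℝ) :
    c ^ 2 ≤ a ^ 2 + b ^ 2 + (c - a) ^ 2 + (b - c) ^ 2 := by
  nlinarith [sq_nonneg (c - a - b), sq_nonneg (a - b)]

lemma sq_le_endpoints_add_mul_sum_sq_sub (f : ℕ → ℝ) {i N : ℕ} (hiN : i ≤ N) :
    f i ^ 2 ≤ f 0 ^ 2 + f N ^ 2 + N * ∑ j ∈ range N, (f (j + 1) - f j) ^ 2 := by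
  set S₁ := ∑ j ∈ range i, (f (j + 1) - f j) ^ 2
  set S₂ := ∑ j ∈ Ico i N, (f (j + 1) - f j) ^ 2
  have hS : ∑ j ∈ range N, (f (j + 1) - f j) ^ 2 = S₁ + S₂ :=
    (sum_range_add_sum_Ico _ hiN).symm
  have h₁ : (f i - f 0) ^ 2 ≤ i * S₁ := by simpa using sq_sub_le_mul_sum_sq_sub f i.zero_le
  have h₂ : (f N - f i) ^ 2 ≤ N * S₂ := by
    refine (sq_sub_le_mul_sum_sq_sub f hiN).trans (mul_le_mul_of_nonneg_right ?_ ?_)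
    · exact_mod_cast N.sub_le i
    · positivity
  have h₃ : (i : ℝ) * S₁ ≤ N * S₁ := by gcongr
  rw [hS]
  nlinarith [sq_le_sq_add_sq_add_sq_sub_add_sq_sub (f 0) (f N) (f i)]

lemma sum_Icc_sq_sub_div_mul_eq (f : ℕ → ℝ) (h : ℝ) (N : ℕ) :
    ∑ i ∈ Icc 1 N, ((f i - f (i - 1)) / h) ^ 2 * h = (∑ j ∈ range N, (f (j + 1) - f j) ^ 2) / h := by
  rw [sum_div, ← Ico_add_one_right_eq_Icc, sum_Ico_eq_sum_range]
  refine sum_congr (by simp) fun j _ => ?_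
  rw [add_tsub_cancel_left, add_comm 1 j]
  rcases eq_or_ne h 0 with rfl | hh
  · simp
  · field_simp

theorem discrete_poincare_with_boundary (l h : ℝ) (N : ℕ) (hl : 0 < l) (hN : 0 < N)
    (hh : h = l / N) (y : ℕ → ℝ) :
    ∑ i ∈ Finset.Ico 1 N, (y i)^2 * h
      ≤ l^2 * (∑ i ∈ Finset.Icc 1 N, ((y i - y (i-1)) / h)^2 * h)
        + l * ((y 0)^2 + (y N)^2) := by
  have hh₀ : 0 < h := hh ▸ by positivity
  have hNh : (N : ℝ) * h = l := by rw [hh]; field_simp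
  set S := ∑ j ∈ range N, (y (j + 1) - y j) ^ 2
  calc ∑ i ∈ Ico 1 N, y i ^ 2 * h
      ≤ ∑ i ∈ Ico 1 N, (y 0 ^ 2 + y N ^ 2 + N * S) * h :=
        sum_le_sum fun i hi => by
          gcongr
          exact sq_le_endpoints_add_mul_sum_sq_sub y (mem_Ico.mp hi).2.le
    _ ≤ N * h * (y 0 ^ 2 + y N ^ 2 + N * S) := by
        rw [sum_const, Nat.card_Ico, nsmul_eq_mul, mul_comm _ h, ← mul_assoc]
        gcongr
        exact_mod_cast N.sub_le 1
    _ = _ := by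
        rw [sum_Icc_sq_sub_div_mul_eq, ← hNh]
        field_simp
        ring
end

section
/- Let 0 < θ < 1, τ > 0, t_s = sτ, c_s = (t_{s+1}^{1-θ} - t_s^{1-θ})/(τ Γ(2-θ)), and suppose real numbers w⁰, …, w^{j+1} with w^s ≥ 0 satisfy, for every 0 ≤ n ≤ j, the inequality Σ_{s=0}^{n} c_{n-s}(w^{s+1} - w^s) + A^{n+1} ≤ B^{n+1} with A^{n+1} ≥ 0. Then (1/Γ(2-θ)) Σ_{s=0}^{j}(t_{j-s+1}^{1-θ} - t_{j-s}^{1-θ}) w^{s+1} + Σ_{n=0}^{j} A^{n+1} τ ≤ Σ_{n=0}^{j} B^{n+1} τ + w⁰ t_{j+1}^{1-θ}/Γ(2-θ). -/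
lemma gronwall_aux (θ τ G : ℝ) (hθ : 0 < 1 - θ) (hτ : 0 < τ)
    (w A B : ℕ → ℝ)
    (d : ℕ → ℝ)
    (hd : ∀ m : ℕ, d m = (((m:ℝ)+1) * τ) ^ (1-θ) - ((m:ℝ) * τ) ^ (1-θ)) :
    ∀ j : ℕ, (∀ n : ℕ, n ≤ j →
      (∑ s ∈ Finset.range (n+1), d (n - s) * (w (s+1) - w s)) + G * τ * A (n+1)
        ≤ G * τ * B (n+1)) →
    (∑ s ∈ Finset.range (j+1), d (j - s) * w (s+1))
      + G * τ * (∑ n ∈ Finset.range (j+1), A (n+1))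
    ≤ G * τ * (∑ n ∈ Finset.range (j+1), B (n+1))
      + w 0 * (((j:ℝ)+1) * τ) ^ (1-θ) := by
  intro j
  induction j with
  | zero =>
    intro h
    have h0 := h 0 le_rfl
    have hz : ((0:ℝ) * τ) ^ (1-θ) = 0 := by
      rw [zero_mul, Real.zero_rpow (by linarith)]
    simp only [zero_add, Finset.sum_range_one, Nat.sub_zero, Nat.cast_zero] at h0 ⊢
    rw [hd 0] at h0 ⊢
    push_cast at h0 ⊢
    rw [hz] at h0 ⊢
    norm_num at h0 ⊢
    linarith
  | succ j ih =>
    intro h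
    have hstep := h (j+1) le_rfl
    have hprev := ih (fun n hn => h n (Nat.le_succ_of_le hn))
    have h1 : (∑ s ∈ Finset.range (j+2), d (j+1 - s) * w s)
        = (∑ s ∈ Finset.range (j+1), d (j - s) * w (s+1)) + d (j+1) * w 0 := by
      rw [Finset.sum_range_succ' (fun s => d (j+1 - s) * w s) (j+1)]
      simp [Nat.succ_sub_succ]
    have key : (∑ s ∈ Finset.range (j+2), d (j+1 - s) * w (s+1))
        = (∑ s ∈ Finset.range (j+2), d (j+1 - s) * (w (s+1) - w s))
          + (∑ s ∈ Finset.range (j+2), d (j+1 - s) * w s) := by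
      rw [← Finset.sum_add_distrib]
      exact Finset.sum_congr rfl (fun s _ => by ring)
    have hdj := hd (j+1)
    push_cast at hdj
    rw [Finset.sum_range_succ (fun n => A (n+1)) (j+1),
        Finset.sum_range_succ (fun n => B (n+1)) (j+1)]
    push_cast
    have hw0 : w 0 * (((j:ℝ)+1) * τ) ^ (1-θ) + d (j+1) * w 0
        = w 0 * ((((j:ℝ)+1)+1) * τ) ^ (1-θ) := by
      rw [hdj]; ring
    linarith [hprev, hstep, key, h1, hw0]

theorem discrete_gronwall_summation (θ τ : ℝ) (hθ : θ ∈ Set.Ioo (0:ℝ) 1) (hτ : 0 < τ)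
    (j : ℕ) (w A B : ℕ → ℝ) (c : ℕ → ℝ)
    (hc : ∀ s : ℕ, c s = ((((s:ℝ)+1) * τ) ^ (1-θ) - ((s:ℝ) * τ) ^ (1-θ))
            / (τ * Real.Gamma (2 - θ)))
    (hw : ∀ s : ℕ, 0 ≤ w s)
    (hA : ∀ n : ℕ, n ≤ j → 0 ≤ A (n+1))
    (hineq : ∀ n : ℕ, n ≤ j →
      (∑ s ∈ Finset.range (n+1), c (n - s) * (w (s+1) - w s)) + A (n+1) ≤ B (n+1)) :
    (1 / Real.Gamma (2 - θ)) *
        (∑ s ∈ Finset.range (j+1),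
          ((((j - s + 1 : ℕ) : ℝ) * τ) ^ (1-θ) - (((j - s : ℕ) : ℝ) * τ) ^ (1-θ)) * w (s+1))
      + (∑ n ∈ Finset.range (j+1), A (n+1) * τ)
    ≤ (∑ n ∈ Finset.range (j+1), B (n+1) * τ)
      + w 0 * (((j:ℝ)+1) * τ) ^ (1-θ) / Real.Gamma (2 - θ) := by
  obtain ⟨hθ0, hθ1⟩ := hθ
  set G : ℝ := Real.Gamma (2 - θ) with hGdef
  have hG : 0 < G := Real.Gamma_pos_of_pos (by linarith)
  set d : ℕ → ℝ := fun m => (((m:ℝ)+1) * τ) ^ (1-θ) - ((m:ℝ) * τ) ^ (1-θ) with hddef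
  have hcd : ∀ m : ℕ, c m = d m / (τ * G) := fun m => hc m
  have hyp : ∀ n : ℕ, n ≤ j →
      (∑ s ∈ Finset.range (n+1), d (n - s) * (w (s+1) - w s)) + G * τ * A (n+1)
        ≤ G * τ * B (n+1) := by
    intro n hn
    have h0 := hineq n hn
    have hGτ : 0 < G * τ := mul_pos hG hτ
    have h1 : (∑ s ∈ Finset.range (n+1), c (n - s) * (w (s+1) - w s))
        = (∑ s ∈ Finset.range (n+1), d (n - s) * (w (s+1) - w s)) / (G * τ) := by
      rw [Finset.sum_div]
      exact Finset.sum_congr rfl (fun s _ => by rw [hcd, mul_comm τ G, div_mul_eq_mul_div])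
    rw [h1] at h0
    rw [div_add' _ _ _ (ne_of_gt hGτ), div_le_iff₀ hGτ] at h0
    nlinarith [h0]
  have main := gronwall_aux θ τ G (by linarith) hτ w A B d (fun m => rfl) j hyp
  have hsum : (∑ s ∈ Finset.range (j+1),
        ((((j - s + 1 : ℕ) : ℝ) * τ) ^ (1-θ) - (((j - s : ℕ) : ℝ) * τ) ^ (1-θ)) * w (s+1))
      = ∑ s ∈ Finset.range (j+1), d (j - s) * w (s+1) := by
    refine Finset.sum_congr rfl (fun s _ => ?_)
    rw [hddef]
    push_cast
    ring
  rw [hsum]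
  rw [← Finset.sum_mul, ← Finset.sum_mul]
  have hL : (1 / G) * (∑ s ∈ Finset.range (j+1), d (j - s) * w (s+1))
      + (∑ n ∈ Finset.range (j+1), A (n+1)) * τ
      = ((∑ s ∈ Finset.range (j+1), d (j - s) * w (s+1))
        + G * τ * (∑ n ∈ Finset.range (j+1), A (n+1))) / G := by
    field_simp
  have hR : (∑ n ∈ Finset.range (j+1), B (n+1)) * τ
      + w 0 * (((j:ℝ)+1) * τ) ^ (1-θ) / G
      = (G * τ * (∑ n ∈ Finset.range (j+1), B (n+1))
        + w 0 * (((j:ℝ)+1) * τ) ^ (1-θ)) / G := by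
    field_simp
  rw [hL, hR]
  gcongr
end
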